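/- Let ρ, p be nonnegative measurable functions on a measurable set B ⊆ ℝ² of finite positive measure, with p = e^S ρ^γ pointwise for a measurable function S satisfying S ≥ S̄ (a constant), γ > 1, and suppose ∫_B ρ dx = m(0) + ρ̄|B| with m(0) ≥ -ρ̄|B|, ρ̄ > 0, p̄ = e^{S̄} ρ̄^γ. Then ∫_B (p - p̄) dx ≥ γ m(0) ρ̄^{γ-1} e^{S̄}. -/

import Mathlib

/-! Convexity of `t ↦ t ^ γ` gives, pointwise on `B`, the tangent-line bound
`p - p̄ ≥ e^{S̄} (ρ ^ γ - ρ̄ ^ γ) ≥ γ ρ̄ ^ (γ - 1) e^{S̄} (ρ - ρ̄)`;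
integrating it over `B` turns `∫_B (ρ - ρ̄)` into `m(0)`. -/

open MeasureTheory Real

theorem Real.rpow_add_mul_sub_le_rpow {γ a t : ℝ} (hγ : 1 ≤ γ) (ha : 0 < a) (ht : 0 ≤ t) :
    a ^ γ + γ * a ^ (γ - 1) * (t - a) ≤ t ^ γ := by
  have hbernoulli : 1 + γ * (t / a - 1) ≤ (1 + (t / a - 1)) ^ γ :=
    one_add_mul_self_le_rpow_one_add (by linarith [div_nonneg ht ha.le]) hγ
  rw [add_sub_cancel, div_rpow ht ha.le] at hbernoulli
  have haγ : 0 < a ^ γ := rpow_pos_of_pos ha γ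
  rw [rpow_sub ha, rpow_one]
  calc a ^ γ + γ * (a ^ γ / a) * (t - a) = a ^ γ * (1 + γ * (t / a - 1)) := by
        field_simp
    _ ≤ a ^ γ * (t ^ γ / a ^ γ) := mul_le_mul_of_nonneg_left hbernoulli haγ.le
    _ = t ^ γ := by field_simp

theorem MeasureTheory.setIntegral_sub_const {α : Type*} [MeasurableSpace α] {μ : Measure α}
    {s : Set α} {f : α → ℝ} (hs : μ s ≠ ⊤) (hf : IntegrableOn f s μ) (c : ℝ) :
    ∫ x in s, (f x - c) ∂μ = ∫ x in s, f x ∂μ - μ.real s * c := by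
  rw [integral_sub hf (integrableOn_const hs), setIntegral_const, smul_eq_mul]

theorem pressure_perturbation_lower_bound_general
    (B : Set (EuclideanSpace ℝ (Fin 2))) (hB : MeasurableSet B)
    (hBfin : volume B ≠ ⊤)
    (γ : ℝ) (hγ : 1 < γ)
    (ρ p S : EuclideanSpace ℝ (Fin 2) → ℝ)
    (hρnonneg : ∀ x ∈ B, 0 ≤ ρ x)
    (Sbar : ℝ) (hS : ∀ x ∈ B, Sbar ≤ S x)
    (hp : ∀ x ∈ B, p x = Real.exp (S x) * ρ x ^ γ)
    (hρint : IntegrableOn ρ B)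
    (hpint : IntegrableOn p B)
    (ρbar m0 : ℝ) (hρbar : 0 < ρbar)
    (hm0 : m0 = (∫ x in B, ρ x) - ρbar * (volume B).toReal)
    (pbar : ℝ) (hpbar : pbar = Real.exp Sbar * ρbar ^ γ) :
    γ * m0 * ρbar ^ (γ - 1) * Real.exp Sbar ≤ ∫ x in B, (p x - pbar) := by
  set c := γ * ρbar ^ (γ - 1) * exp Sbar
  have hpointwise : ∀ x ∈ B, c * (ρ x - ρbar) ≤ p x - pbar := fun x hx => by
    have htangent := rpow_add_mul_sub_le_rpow hγ.le hρbar (hρnonneg x hx)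
    have hexp : exp Sbar * ρ x ^ γ ≤ p x := by
      rw [hp x hx]
      exact mul_le_mul_of_nonneg_right (exp_le_exp.2 (hS x hx)) (rpow_nonneg (hρnonneg x hx) γ)
    nlinarith [exp_pos Sbar]
  have hρsub : ∫ x in B, (ρ x - ρbar) = m0 := by
    rw [setIntegral_sub_const hBfin hρint, hm0, measureReal_def, mul_comm]
  calc γ * m0 * ρbar ^ (γ - 1) * exp Sbar = ∫ x in B, c * (ρ x - ρbar) := by
        rw [integral_const_mul, hρsub]; ring
    _ ≤ ∫ x in B, (p x - pbar) :=
        setIntegral_mono_on ((hρint.sub (integrableOn_const hBfin)).const_mul c)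
          (hpint.sub (integrableOn_const hBfin)) hB hpointwise

theorem pressure_perturbation_lower_bound
    (B : Set (EuclideanSpace ℝ (Fin 2))) (hB : MeasurableSet B)
    (hBpos : 0 < (volume B).toReal) (hBfin : volume B ≠ ⊤)
    (γ : ℝ) (hγ : 1 < γ)
    (ρ p S : EuclideanSpace ℝ (Fin 2) → ℝ)
    (hρmeas : Measurable ρ) (hSmeas : Measurable S)
    (hρnonneg : ∀ x ∈ B, 0 ≤ ρ x)
    (Sbar : ℝ) (hS : ∀ x ∈ B, Sbar ≤ S x)
    (hp : ∀ x ∈ B, p x = Real.exp (S x) * ρ x ^ γ)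
    (hρint : IntegrableOn ρ B)
    (hργint : IntegrableOn (fun x => ρ x ^ γ) B)
    (hpint : IntegrableOn p B)
    (ρbar m0 : ℝ) (hρbar : 0 < ρbar)
    (hm0 : m0 = (∫ x in B, ρ x) - ρbar * (volume B).toReal)
    (hm0' : -ρbar * (volume B).toReal ≤ m0)
    (pbar : ℝ) (hpbar : pbar = Real.exp Sbar * ρbar ^ γ) :
    γ * m0 * ρbar ^ (γ - 1) * Real.exp Sbar ≤ ∫ x in B, (p x - pbar) :=
  pressure_perturbation_lower_bound_general B hB hBfin γ hγ ρ p S hρnonneg Sbar hS hp hρint hpint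
    ρbar m0 hρbar hm0 pbar hpbar
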